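/- Let a be a fixed positive K-dimensional row vector, and let H(d) be a K×K matrix depending on d = (d_1,…,d_K) through its rows h_k(d) = α_k + β_k d_k for fixed row vectors α_k, β_k; let 𝒦 be the matrix with rows β_1,…,β_K. Suppose I − H(d) is invertible and a(I−H(d))^{-1}1′ ≠ 0. Define v(d) = a(I−H(d))^{-1} / (a(I−H(d))^{-1}1′) and A = (I−H)^{-1}(I − 1′v). Then ∂(I−H)^{-1}/∂d_k = (I−H)^{-1} diag(1_k) 𝒦 (I−H)^{-1}, and ∂v/∂d_k = v diag(1_k) 𝒦 A for each k; equivalently, ∂v/∂d = diag(v) 𝒦 A, where 1_k is the vector with k-th entry 1 and all other entries 0. -/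

import Mathlib

open MeasureTheory ProbabilityTheory Filter Asymptotics Matrix Topology

noncomputable section

/-- The covariance of two real-valued random variables. -/
def rcov {Ω : Type*} [MeasurableSpace Ω] (μ : Measure Ω) (f g : Ω → ℝ) : ℝ :=
  (∫ ω, f ω * g ω ∂μ) - (∫ ω, f ω ∂μ) * (∫ ω, g ω ∂μ)

/-- A random vector is centered Gaussian with covariance matrix `S` iff every linear
combination of its coordinates is a (possibly degenerate) centered one-dimensional
Gaussian with the corresponding variance (Cramér–Wold characterization). -/
def IsCenteredGaussian {Ω ι : Type*} [MeasurableSpace Ω] [Fintype ι] (μ : Measure Ω)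
    (V : Ω → ι → ℝ) (S : Matrix ι ι ℝ) : Prop :=
  ∀ c : ι → ℝ,
    μ.map (fun ω => ∑ i, c i * V ω i) =
      gaussianReal 0 (Real.toNNReal (∑ i, ∑ j, c i * S i j * c j))

/-- Convergence in distribution of real-valued random variables to the law `ν`. -/
def TendstoInDistribution {Ω : Type*} [MeasurableSpace Ω] (μ : Measure Ω)
    (Y : ℕ → Ω → ℝ) (ν : Measure ℝ) : Prop :=
  ∀ g : BoundedContinuousFunction ℝ ℝ,
    Tendsto (fun n => ∫ ω, g (Y n ω) ∂μ) atTop (𝓝 (∫ x, g x ∂ν))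

/-- Convergence in distribution of random vectors to the centered multivariate normal
distribution `N(0, S)` (via the Cramér–Wold device). -/
def TendstoGaussian {Ω ι : Type*} [MeasurableSpace Ω] [Fintype ι] (μ : Measure Ω)
    (Y : ℕ → Ω → ι → ℝ) (S : Matrix ι ι ℝ) : Prop :=
  ∀ c : ι → ℝ,
    TendstoInDistribution μ (fun n ω => ∑ i, c i * Y n ω i)
      (gaussianReal 0 (Real.toNNReal (∑ i, ∑ j, c i * S i j * c j)))

/-- A multidimensional (correlated) Wiener process with covariance structure `t ↦ t • Λ`:
it starts at `0`, has a.s. continuous paths, has independent increments, and the increment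
over `[s, t]` is a centered Gaussian vector with covariance matrix `(t - s) • Λ`. -/
def IsWienerProcess {Ω ι : Type*} [MeasurableSpace Ω] [Fintype ι] (μ : Measure Ω)
    (W : ℝ → Ω → ι → ℝ) (L : Matrix ι ι ℝ) : Prop :=
  (∀ᵐ ω ∂μ, W 0 ω = 0) ∧
  (∀ᵐ ω ∂μ, Continuous fun t => W t ω) ∧
  (∀ s t : ℝ, 0 ≤ s → s ≤ t →
    IsCenteredGaussian μ (fun ω i => W t ω i - W s ω i) ((t - s) • L)) ∧
  (∀ ts : ℕ → ℝ, (∀ i, 0 ≤ ts i) → Monotone ts →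
    iIndepFun
      (fun i ω => fun x : ι => W (ts (i + 1)) ω x - W (ts i) ω x) μ)

/-- The immigrated urn (IMU) model.  An urn contains balls of types `0, 1, …, K`; the
number `Z00` of immigration (type-`0`) balls never changes.  For the `m`-th incoming
subject, balls are drawn at random with probabilities proportional to the positive-part
ball counts; a drawn type-`0` ball is replaced and `imr (m-1) k` balls of each treatment
type `k` are added (this being repeated `u m` times), until a treatment ball, say of type
`k`, is drawn: then the subject is assigned to treatment `k` (`X m k = 1`), the response
`ξ m k` is observed, the drawn ball is removed and `D m k j` balls of type `j` are added.
`Zt m k` is the number of type-`k` treatment balls after the `m`-th assignment,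
`u m` the number of type-`0` draws between the `(m-1)`-th and the `m`-th assignment,
and `imr m k` the immigration rate `a_{m,k}`. -/
structure IMUModel (K : ℕ) where
  (Ω : Type)
  [mΩ : MeasurableSpace Ω]
  (μ : Measure Ω)
  [isProb : IsProbabilityMeasure μ]
  (ξ : ℕ → Fin K → Ω → ℝ)
  (D : ℕ → Fin K → Fin K → Ω → ℝ)
  (Zt : ℕ → Fin K → Ω → ℝ)
  (Z00 : ℝ)
  (X : ℕ → Fin K → Ω → ℝ)
  (u : ℕ → Ω → ℕ)
  (imr : ℕ → Fin K → Ω → ℝ)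
  (meas_ξ : ∀ m k, Measurable (ξ m k))
  (meas_D : ∀ m k j, Measurable (D m k j))
  (meas_Zt : ∀ m k, Measurable (Zt m k))
  (meas_X : ∀ m k, Measurable (X m k))
  (meas_u : ∀ m, Measurable (u m))
  (meas_imr : ∀ m k, Measurable (imr m k))
  (Z00_pos : 0 < Z00)
  (Zt0_const : ∀ k ω ω', Zt 0 k ω = Zt 0 k ω')
  (Zt0_pos : ∀ k ω, 0 < Zt 0 k ω)
  (X_indicator : ∀ m k ω, X m k ω = 0 ∨ X m k ω = 1)
  (X_sum_one : ∀ m, 1 ≤ m → ∀ ω, (∑ k, X m k ω) = 1)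
  (imr_nonneg : ∀ m k ω, 0 ≤ imr m k ω)
  (update : ∀ m, 1 ≤ m → ∀ k ω,
    Zt m k ω = Zt (m - 1) k ω + (u m ω : ℝ) * imr (m - 1) k ω
      + ∑ j, X m j ω * (D m j k ω - if j = k then 1 else 0))

attribute [instance] IMUModel.mΩ IMUModel.isProb

namespace IMUModel

variable {K : ℕ} (M : IMUModel K)

/-- `N n k` : number of the first `n` subjects assigned to treatment `k`. -/
def N (n : ℕ) (k : Fin K) (ω : M.Ω) : ℝ := ∑ m ∈ Finset.Icc 1 n, M.X m k ω

/-- `N0 n` : total number of type-`0` draws through the `n`-th assignment. -/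
def N0 (n : ℕ) (ω : M.Ω) : ℝ := ∑ m ∈ Finset.Icc 1 n, (M.u m ω : ℝ)

/-- `θv k` : the unknown parameter `θ_k`, the mean of the response `ξ_{1,k}`. -/
def θv (k : Fin K) : ℝ := ∫ ω, M.ξ 1 k ω ∂M.μ

/-- The martingale `Q n k = ∑_{m=1}^n X_{m,k} (ξ_{m,k} - E ξ_{m,k})`. -/
def Q (n : ℕ) (k : Fin K) (ω : M.Ω) : ℝ :=
  ∑ m ∈ Finset.Icc 1 n, M.X m k ω * (M.ξ m k ω - ∫ ω', M.ξ m k ω' ∂M.μ)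

/-- The estimator `θ̂_{n,k} = (α + S_{n,k})/(β + N_{n,k})`. -/
def est (eα eβ : ℝ) (n : ℕ) (k : Fin K) (ω : M.Ω) : ℝ :=
  (eα + ∑ m ∈ Finset.Icc 1 n, M.X m k ω * M.ξ m k ω) / (eβ + M.N n k ω)

/-- The mean replacement matrix `H = E D_1`. -/
def Hm : Matrix (Fin K) (Fin K) ℝ := Matrix.of fun k j => ∫ ω, M.D 1 k j ω ∂M.μ

/-- The history σ-field generated by everything up to the `n`-th assignment. -/
def hist (n : ℕ) : MeasurableSpace M.Ω :=
  ⨆ m ∈ Finset.Icc 1 n,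
    (MeasurableSpace.comap (fun ω => fun k => M.X m k ω)
        (inferInstance : MeasurableSpace (Fin K → ℝ)) ⊔
     MeasurableSpace.comap (fun ω => fun k => M.ξ m k ω)
        (inferInstance : MeasurableSpace (Fin K → ℝ)) ⊔
     MeasurableSpace.comap (fun ω => fun p : Fin K × Fin K => M.D m p.1 p.2 ω)
        (inferInstance : MeasurableSpace (Fin K × Fin K → ℝ)) ⊔
     MeasurableSpace.comap (fun ω => fun k => M.Zt m k ω)
        (inferInstance : MeasurableSpace (Fin K → ℝ)) ⊔
     MeasurableSpace.comap (M.u m) (inferInstance : MeasurableSpace ℕ))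

/-- The total positive-part number of balls in the urn after `l` immigration rounds
following the `m`-th assignment. -/
def totalPos (m l : ℕ) (ω : M.Ω) : ℝ :=
  M.Z00 + ∑ k, max (M.Zt m k ω + (l : ℝ) * M.imr m k ω) 0

/-- The law of the drawing procedure: given the history, the probability that the
immigration ball is drawn exactly `l` times and then the `m`-th subject is assigned
to treatment `k` is `(∏_{j<l} Z00/|Z⁺ + j a|) ⬝ (Z_k + l a_k)⁺ / |Z⁺ + l a|`. -/
def DrawLaw : Prop :=
  ∀ m, 1 ≤ m → ∀ (l : ℕ) (k : Fin K),
    (MeasureTheory.condExp (M.hist (m - 1)) M.μ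
        (Set.indicator {ω | M.u m ω = l ∧ M.X m k ω = 1} fun _ => (1 : ℝ)))
      =ᵐ[M.μ]
    fun ω => (∏ j ∈ Finset.range l, M.Z00 / M.totalPos (m - 1) j ω) *
      (max (M.Zt (m - 1) k ω + (l : ℝ) * M.imr (m - 1) k ω) 0 / M.totalPos (m - 1) l ω)

/-- The fresh randomness `(ξ_m, D_m)` of the `m`-th subject is independent of the past
and of the `m`-th draw. -/
def FreshIndep : Prop :=
  ∀ m, 1 ≤ m →
    Indep
      (MeasurableSpace.comap
          (fun ω => ((fun k => M.ξ m k ω), fun p : Fin K × Fin K => M.D m p.1 p.2 ω))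
          (inferInstance : MeasurableSpace ((Fin K → ℝ) × (Fin K × Fin K → ℝ))))
      (M.hist (m - 1) ⊔
        MeasurableSpace.comap (fun ω => fun k => M.X m k ω)
          (inferInstance : MeasurableSpace (Fin K → ℝ)) ⊔
        MeasurableSpace.comap (M.u m) (inferInstance : MeasurableSpace ℕ))
      M.μ

/-- For each `k`, `{(ξ_{m,k}, D_{m,k1}, …, D_{m,kK}) : m ≥ 1}` is an i.i.d. sequence. -/
def RowIID : Prop :=
  ∀ k : Fin K,
    iIndepFun
      (fun m ω => (⟨M.ξ (m + 1) k ω, fun j => M.D (m + 1) k j ω⟩ : ℝ × (Fin K → ℝ))) M.μ ∧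
    ∀ m, 1 ≤ m →
      IdentDistrib (fun ω => (⟨M.ξ m k ω, fun j => M.D m k j ω⟩ : ℝ × (Fin K → ℝ)))
        (fun ω => (⟨M.ξ 1 k ω, fun j => M.D 1 k j ω⟩ : ℝ × (Fin K → ℝ))) M.μ M.μ

/-- The immigration rates are `a_{m,k} = a_k(θ̂_m)` where `θ̂_m` is the current estimate
of `θ`. -/
def UsesEstimator (a : (Fin K → ℝ) → Fin K → ℝ) (eα eβ : ℝ) : Prop :=
  0 < eα ∧ 0 < eβ ∧ ∀ m k ω, M.imr m k ω = a (fun i => M.est eα eβ m i ω) k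

/-- Assumption (A1): the functions `a_k(⬝) > 0` are continuous and twice differentiable
at `θ`. -/
def A1 (a : (Fin K → ℝ) → Fin K → ℝ) : Prop :=
  ∀ k, (∀ x, 0 < a x k) ∧ Continuous (fun x => a x k) ∧
    ContDiffAt ℝ 2 (fun x => a x k) M.θv

/-- Assumption (A2): moment conditions on the responses and the adding rules. -/
def A2 (δ C : ℝ) : Prop :=
  0 < δ ∧ δ ≤ 2 ∧
  (∀ m k j, 1 ≤ m → Integrable (fun ω => |M.D m k j ω| ^ (2 + δ)) M.μ) ∧
  (∀ m k, 1 ≤ m → Integrable (fun ω => |M.ξ m k ω| ^ (2 + δ)) M.μ) ∧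
  (∀ m k, 1 ≤ m → ∀ᵐ ω ∂M.μ, -C ≤ M.D m k k ω) ∧
  (∀ k j, k ≠ j → (0 < M.Hm k j ∨ ∀ m, 1 ≤ m → ∀ᵐ ω ∂M.μ, 0 ≤ M.D m k j ω))

/-- Assumption (A3): `H 1′ < 1′`, i.e. each row of `H` sums to less than `1`. -/
def A3 : Prop := ∀ k, ∑ j, M.Hm k j < 1

/-- `v(x) = a(x)(I-H)⁻¹ / (a(x)(I-H)⁻¹ 1′)` as a function of the parameter `x`. -/
def vFun (a : (Fin K → ℝ) → Fin K → ℝ) (x : Fin K → ℝ) (k : Fin K) : ℝ :=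
  Matrix.vecMul (fun i => a x i) (1 - M.Hm)⁻¹ k /
    ∑ j, Matrix.vecMul (fun i => a x i) (1 - M.Hm)⁻¹ j

/-- `s = a(θ)(I-H)⁻¹ 1′`. -/
def sv (a : (Fin K → ℝ) → Fin K → ℝ) : ℝ :=
  ∑ j, Matrix.vecMul (fun i => a M.θv i) (1 - M.Hm)⁻¹ j

/-- The limiting allocation proportion `v = v(θ)`. -/
def vv (a : (Fin K → ℝ) → Fin K → ℝ) (k : Fin K) : ℝ := M.vFun a M.θv k

/-- The matrix `∂v(θ)/∂θ = (∂v_k(θ)/∂θ_j)_{j,k}` of partial derivatives at `θ`. -/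
def dv (a : (Fin K → ℝ) → Fin K → ℝ) : Matrix (Fin K) (Fin K) ℝ :=
  Matrix.of fun j k => fderiv ℝ (fun x => M.vFun a x k) M.θv (Pi.single j 1)

/-- The matrix `A = (I-H)⁻¹(I - 1′v)`. -/
def Am (a : (Fin K → ℝ) → Fin K → ℝ) : Matrix (Fin K) (Fin K) ℝ :=
  (1 - M.Hm)⁻¹ * (1 - Matrix.of fun _ j => M.vv a j)

/-- `Σ_k = Var(D_1^{(k)})`, the covariance matrix of the `k`-th row of `D_1`. -/
def SigK (k : Fin K) : Matrix (Fin K) (Fin K) ℝ :=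
  Matrix.of fun i j => rcov M.μ (M.D 1 k i) (M.D 1 k j)

/-- `Σ11 = ∑_k v_k Σ_k`. -/
def Sig11 (a : (Fin K → ℝ) → Fin K → ℝ) : Matrix (Fin K) (Fin K) ℝ :=
  ∑ k, M.vv a k • M.SigK k

/-- `Σ12 = (Cov(D_{1,kj}, ξ_{1,k}))_{j,k}`. -/
def Sig12 : Matrix (Fin K) (Fin K) ℝ :=
  Matrix.of fun j k => rcov M.μ (M.D 1 k j) (M.ξ 1 k)

/-- `σ_{ξk}² = Var(ξ_{1,k})`. -/
def varxi (k : Fin K) : ℝ := rcov M.μ (M.ξ 1 k) (M.ξ 1 k)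

/-- `Σ_D = A′ Σ11 A`. -/
def SigD (a : (Fin K → ℝ) → Fin K → ℝ) : Matrix (Fin K) (Fin K) ℝ :=
  (M.Am a)ᵀ * M.Sig11 a * M.Am a

/-- `Σ_{Dξ} = A′ Σ12 (∂v/∂θ)`. -/
def SigDxi (a : (Fin K → ℝ) → Fin K → ℝ) : Matrix (Fin K) (Fin K) ℝ :=
  (M.Am a)ᵀ * M.Sig12 * M.dv a

/-- `Σ_ξ = (∂v/∂θ)′ diag(σ_{ξ1}²/v_1, …, σ_{ξK}²/v_K) (∂v/∂θ)`. -/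
def Sigxi (a : (Fin K → ℝ) → Fin K → ℝ) : Matrix (Fin K) (Fin K) ℝ :=
  (M.dv a)ᵀ * Matrix.diagonal (fun k => M.varxi k / M.vv a k) * M.dv a

/-- The `2K × 2K` matrix `Λ` with blocks `Σ11`, `Σ12 diag(v)`, `diag(v) Σ12′` and
`Σ22 diag(v)`, where `Σ22 = diag(Var ξ_{1,1}, …, Var ξ_{1,K})`. -/
def Lam (a : (Fin K → ℝ) → Fin K → ℝ) : Matrix (Fin K ⊕ Fin K) (Fin K ⊕ Fin K) ℝ :=
  Matrix.fromBlocks (M.Sig11 a) (M.Sig12 * Matrix.diagonal (M.vv a))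
    (Matrix.diagonal (M.vv a) * (M.Sig12)ᵀ)
    (Matrix.diagonal (fun k => M.varxi k) * Matrix.diagonal (M.vv a))

end IMUModel

/-- `H(d)`, the matrix whose rows are `h_k = α_k + β_k d_k`. -/
def Hlin {K : ℕ} (av bv : Fin K → Fin K → ℝ) (d : Fin K → ℝ) :
    Matrix (Fin K) (Fin K) ℝ :=
  Matrix.of fun k j => av k j + bv k j * d k

/-- `v(d) = a (I - H(d))⁻¹ / (a (I - H(d))⁻¹ 1′)`. -/
def vlin {K : ℕ} (a : Fin K → ℝ) (av bv : Fin K → Fin K → ℝ)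
    (d : Fin K → ℝ) (k : Fin K) : ℝ :=
  Matrix.vecMul a (1 - Hlin av bv d)⁻¹ k / ∑ j, Matrix.vecMul a (1 - Hlin av bv d)⁻¹ j

/-!
`M(d) = I - H(d) = (I - α) - diag(d) 𝒦` is affine in `d`, so the derivative of matrix inversion,
`δ(M⁻¹) = -M⁻¹ (δM) M⁻¹`, gives `∂(I-H)⁻¹/∂d_k = (I-H)⁻¹ diag(1_k) 𝒦 (I-H)⁻¹`.
The vector `v` is the normalization `w / (w 1′)` of `w = a (I-H)⁻¹`, and normalizing turns a
derivative `w'` into `(w' / (w 1′)) (I - 1′v)`. Since `a (I-H)⁻¹ diag(1_k) 𝒦 (I-H)⁻¹ / (w 1′)`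
is `v diag(1_k) 𝒦 (I-H)⁻¹`, this is `v diag(1_k) 𝒦 A`, the `k`-th row of `diag(v) 𝒦 A`.
-/

theorem Matrix.vecMul_one_sub_of_const {R n : Type*} [CommRing R] [Fintype n] [DecidableEq n]
    (u v : n → R) : u ᵥ* (1 - of fun _ j => v j) = u - (∑ i, u i) • v := by
  ext j
  simp [vecMul, dotProduct, mul_sub, Finset.sum_sub_distrib, Matrix.one_apply, Finset.sum_mul]

theorem DifferentiableAt.fderiv_div_sum_apply {𝕜 E n : Type*} [NontriviallyNormedField 𝕜]
    [NormedAddCommGroup E] [NormedSpace 𝕜 E] [Fintype n] [DecidableEq n]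
    {w : E → n → 𝕜} {x : E} (hw : DifferentiableAt 𝕜 w x) (hs : ∑ i, w x i ≠ 0)
    (j : n) (v : E) :
    fderiv 𝕜 (fun y => w y j / ∑ i, w y i) x v =
      (((∑ i, w x i)⁻¹ • fderiv 𝕜 w x v) ᵥ* (1 - of fun _ k => w x k / ∑ i, w x i)) j := by
  have hcomp : ∀ i, HasFDerivAt (fun y => w y i)
      (ContinuousLinearMap.proj i ∘L fderiv 𝕜 w x) x :=
    hasFDerivAt_pi'.mp hw.hasFDerivAt
  have hsum := HasFDerivAt.fun_sum (u := Finset.univ) fun i _ => hcomp i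
  have hquot := (hcomp j).fun_mul ((hasFDerivAt_inv' hs).comp x hsum)
  simp only [Function.comp_apply] at hquot
  simp only [div_eq_mul_inv]
  rw [hquot.fderiv, vecMul_one_sub_of_const]
  simp only [_root_.add_apply, _root_.smul_apply, ContinuousLinearMap.comp_apply,
    _root_.neg_apply, ContinuousLinearMap.mulLeftRight_apply, _root_.sum_apply,
    ContinuousLinearMap.proj_apply, smul_eq_mul, Pi.sub_apply, Pi.smul_apply, ← Finset.mul_sum]
  ring

theorem Matrix.vecMul_diagonal_single_one_vecMul {R m n : Type*} [CommSemiring R] [Fintype n]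
    [DecidableEq n] (v : n → R) (j : n) (M : Matrix n m R) :
    v ᵥ* diagonal (Pi.single j 1) ᵥ* M = (diagonal v * M) j := by
  have hsingle : v ᵥ* diagonal (Pi.single j 1) = Pi.single j (v j) := by
    ext i
    rw [vecMul_diagonal]
    by_cases h : i = j <;> simp [h]
  ext k
  simp [hsingle, diagonal_mul]

theorem one_sub_Hlin {K : ℕ} (av bv : Fin K → Fin K → ℝ) (d : Fin K → ℝ) :
    1 - Hlin av bv d = (1 - of av) - diagonal d * of bv := by
  ext k j
  simp only [Hlin, Matrix.sub_apply, of_apply, diagonal_mul]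
  ring

section MatrixCalculus

open ContinuousLinearMap

variable {𝕜 E m n : Type*} [RCLike 𝕜] [NormedAddCommGroup E] [NormedSpace 𝕜 E]
  [Fintype m] [Fintype n] {x : E}

-- `Matrix` has no global norm; matrix inversion needs a normed-algebra structure.
attribute [local instance] Matrix.linftyOpNormedAddCommGroup Matrix.linftyOpNormedSpace
  Matrix.linftyOpNormedRing Matrix.linftyOpNormedAlgebra

theorem fderiv_matrix_apply {F : E → Matrix m n 𝕜} (hF : DifferentiableAt 𝕜 F x)
    (i : m) (j : n) (v : E) :
    fderiv 𝕜 (fun y => F y i j) x v = fderiv 𝕜 F x v i j :=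
  congrArg (· v)
    ((entryLinearMap 𝕜 𝕜 i j).toContinuousLinearMap.hasFDerivAt.comp x hF.hasFDerivAt).fderiv

theorem DifferentiableAt.matrix_vecMul {F : E → Matrix m n 𝕜} (hF : DifferentiableAt 𝕜 F x)
    (a : m → 𝕜) : DifferentiableAt 𝕜 (fun y => a ᵥ* F y) x := by
  have h := (vecMulBilin 𝕜 𝕜 a).toContinuousLinearMap.hasFDerivAt.comp x hF.hasFDerivAt
  exact h.differentiableAt

theorem fderiv_vecMul_apply {F : E → Matrix m n 𝕜} (hF : DifferentiableAt 𝕜 F x)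
    (a : m → 𝕜) (v : E) :
    fderiv 𝕜 (fun y => a ᵥ* F y) x v = a ᵥ* fderiv 𝕜 F x v :=
  congrArg (· v)
    ((vecMulBilin 𝕜 𝕜 a).toContinuousLinearMap.hasFDerivAt.comp x hF.hasFDerivAt).fderiv

variable [DecidableEq n]

theorem HasFDerivAt.matrix_inv {F : E → Matrix n n 𝕜} {F' : E →L[𝕜] Matrix n n 𝕜}
    (hF : HasFDerivAt F F' x) (hx : IsUnit (F x)) :
    HasFDerivAt (fun y => (F y)⁻¹) (-mulLeftRight 𝕜 _ (F x)⁻¹ (F x)⁻¹ ∘L F') x := by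
  have : CompleteSpace (Matrix n n 𝕜) := FiniteDimensional.complete 𝕜 _
  obtain ⟨u, hu⟩ := hx
  have hinv : (↑u⁻¹ : Matrix n n 𝕜) = (F x)⁻¹ := by
    rw [nonsing_inv_eq_ringInverse, ← hu, Ring.inverse_unit]
  have hring := hasFDerivAt_ringInverse (𝕜 := 𝕜) u
  rw [hinv, hu] at hring
  have hcomp := hring.comp x hF
  simp only [Function.comp_def, ← nonsing_inv_eq_ringInverse] at hcomp
  exact hcomp

theorem DifferentiableAt.matrix_inv {F : E → Matrix n n 𝕜} (hF : DifferentiableAt 𝕜 F x)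
    (hx : IsUnit (F x)) : DifferentiableAt 𝕜 (fun y => (F y)⁻¹) x :=
  (hF.hasFDerivAt.matrix_inv hx).differentiableAt

theorem fderiv_matrix_inv_apply {F : E → Matrix n n 𝕜} (hF : DifferentiableAt 𝕜 F x)
    (hx : IsUnit (F x)) (v : E) :
    fderiv 𝕜 (fun y => (F y)⁻¹) x v = -((F x)⁻¹ * fderiv 𝕜 F x v * (F x)⁻¹) :=
  congrArg (· v) (hF.hasFDerivAt.matrix_inv hx).fderiv

theorem hasFDerivAt_one_sub_Hlin {K : ℕ} (av bv : Fin K → Fin K → ℝ) (d : Fin K → ℝ) :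
    HasFDerivAt (fun dd => 1 - Hlin av bv dd)
      (-(LinearMap.mulRight ℝ (of bv) ∘ₗ diagonalLinearMap (Fin K) ℝ ℝ).toContinuousLinearMap) d := by
  simp only [one_sub_Hlin]
  exact (LinearMap.mulRight ℝ (of bv) ∘ₗ
    diagonalLinearMap (Fin K) ℝ ℝ).toContinuousLinearMap.hasFDerivAt.const_sub _

theorem fderiv_one_sub_Hlin_apply {K : ℕ} (av bv : Fin K → Fin K → ℝ) (d v : Fin K → ℝ) :
    fderiv ℝ (fun dd => 1 - Hlin av bv dd) d v = -(diagonal v * of bv) :=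
  congrArg (· v) (hasFDerivAt_one_sub_Hlin av bv d).fderiv

end MatrixCalculus

theorem fderiv_inv_one_sub_Hlin_apply {K : ℕ} (av bv : Fin K → Fin K → ℝ) {d : Fin K → ℝ}
    (hinv : IsUnit (1 - Hlin av bv d)) (i j : Fin K) (v : Fin K → ℝ) :
    fderiv ℝ (fun dd => (1 - Hlin av bv dd)⁻¹ i j) d v =
      ((1 - Hlin av bv d)⁻¹ * diagonal v * of bv * (1 - Hlin av bv d)⁻¹) i j := by
  have hdiff := (hasFDerivAt_one_sub_Hlin av bv d).differentiableAt
  rw [fderiv_matrix_apply (hdiff.matrix_inv hinv), fderiv_matrix_inv_apply hdiff hinv,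
    fderiv_one_sub_Hlin_apply]
  simp [Matrix.mul_assoc]

theorem fderiv_vlin_apply {K : ℕ} (a : Fin K → ℝ) (av bv : Fin K → Fin K → ℝ) {d : Fin K → ℝ}
    (hinv : IsUnit (1 - Hlin av bv d)) (hden : ∑ j, (a ᵥ* (1 - Hlin av bv d)⁻¹) j ≠ 0)
    (j : Fin K) (v : Fin K → ℝ) :
    fderiv ℝ (fun dd => vlin a av bv dd j) d v =
      (vlin a av bv d ᵥ* diagonal v ᵥ* of bv ᵥ*
        ((1 - Hlin av bv d)⁻¹ * (1 - of fun _ j' => vlin a av bv d j'))) j := by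
  have hdiff := (hasFDerivAt_one_sub_Hlin av bv d).differentiableAt
  have hG := hdiff.matrix_inv hinv
  have hfun : (fun dd => vlin a av bv dd j) = fun dd =>
      (a ᵥ* (1 - Hlin av bv dd)⁻¹) j / ∑ i, (a ᵥ* (1 - Hlin av bv dd)⁻¹) i := rfl
  rw [hfun, (hG.matrix_vecMul a).fderiv_div_sum_apply hden, fderiv_vecMul_apply hG,
    fderiv_matrix_inv_apply hdiff hinv, fderiv_one_sub_Hlin_apply]
  set G := (1 - Hlin av bv d)⁻¹
  have hvlin : vlin a av bv d = (∑ i, (a ᵥ* G) i)⁻¹ • a ᵥ* G := by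
    ext k
    simp [vlin, G, div_eq_inv_mul]
  have hrow : (∑ i, (a ᵥ* G) i)⁻¹ • a ᵥ* -(G * -(diagonal v * of bv) * G) =
      vlin a av bv d ᵥ* (diagonal v * of bv * G) := by
    rw [hvlin, mul_neg, neg_mul, neg_neg, smul_vecMul, vecMul_vecMul, Matrix.mul_assoc]
  change ((_ • _) ᵥ* (1 - of fun _ k => vlin a av bv d k)) j = _
  rw [hrow]
  simp only [vecMul_vecMul, Matrix.mul_assoc]

theorem vlin_fderiv_formulas_general {K : ℕ} (a : Fin K → ℝ)
    (av bv : Fin K → Fin K → ℝ) (d : Fin K → ℝ)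
    (hinv : IsUnit (1 - Hlin av bv d))
    (hden : ∑ j, Matrix.vecMul a (1 - Hlin av bv d)⁻¹ j ≠ 0) :
    (∀ k i j,
      fderiv ℝ (fun dd => (1 - Hlin av bv dd)⁻¹ i j) d (Pi.single k 1) =
        (((1 - Hlin av bv d)⁻¹ * Matrix.diagonal (Pi.single k 1) * Matrix.of bv *
          (1 - Hlin av bv d)⁻¹ : Matrix (Fin K) (Fin K) ℝ)) i j) ∧
    (∀ k j,
      fderiv ℝ (fun dd => vlin a av bv dd j) d (Pi.single k 1) =
        Matrix.vecMul (Matrix.vecMul (Matrix.vecMul (vlin a av bv d)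
            (Matrix.diagonal (Pi.single k 1))) (Matrix.of bv))
          ((1 - Hlin av bv d)⁻¹ * (1 - Matrix.of fun _ j' => vlin a av bv d j')) j) ∧
    (Matrix.of (fun j k => fderiv ℝ (fun dd => vlin a av bv dd k) d (Pi.single j 1)) =
      Matrix.diagonal (vlin a av bv d) * Matrix.of bv *
        ((1 - Hlin av bv d)⁻¹ * (1 - Matrix.of fun _ j' => vlin a av bv d j'))) := by
  have hv := fderiv_vlin_apply a av bv hinv hden
  refine ⟨fun k i j => fderiv_inv_one_sub_Hlin_apply av bv hinv i j _, fun k j => hv j _, ?_⟩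
  ext j k
  rw [of_apply, hv, vecMul_vecMul _ (of bv), vecMul_diagonal_single_one_vecMul, Matrix.mul_assoc]

/-- **Matrix-calculus identities in the proof of Theorem 4.1.**
`∂(I-H)⁻¹/∂d_k = (I-H)⁻¹ diag(1_k) 𝒦 (I-H)⁻¹` and `∂v/∂d_k = v diag(1_k) 𝒦 A`;
equivalently `∂v/∂d = diag(v) 𝒦 A`, with `A = (I-H)⁻¹（I - 1′v)`. -/
theorem vlin_fderiv_formulas {K : ℕ} (a : Fin K → ℝ) (ha : ∀ k, 0 < a k)
    (av bv : Fin K → Fin K → ℝ) (d : Fin K → ℝ)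
    (hinv : IsUnit (1 - Hlin av bv d))
    (hden : ∑ j, Matrix.vecMul a (1 - Hlin av bv d)⁻¹ j ≠ 0) :
    (∀ k i j,
      fderiv ℝ (fun dd => (1 - Hlin av bv dd)⁻¹ i j) d (Pi.single k 1) =
        (((1 - Hlin av bv d)⁻¹ * Matrix.diagonal (Pi.single k 1) * Matrix.of bv *
          (1 - Hlin av bv d)⁻¹ : Matrix (Fin K) (Fin K) ℝ)) i j) ∧
    (∀ k j,
      fderiv ℝ (fun dd => vlin a av bv dd j) d (Pi.single k 1) =
        Matrix.vecMul (Matrix.vecMul (Matrix.vecMul (vlin a av bv d)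
            (Matrix.diagonal (Pi.single k 1))) (Matrix.of bv))
          ((1 - Hlin av bv d)⁻¹ * (1 - Matrix.of fun _ j' => vlin a av bv d j')) j) ∧
    (Matrix.of (fun j k => fderiv ℝ (fun dd => vlin a av bv dd k) d (Pi.single j 1)) =
      Matrix.diagonal (vlin a av bv d) * Matrix.of bv *
        ((1 - Hlin av bv d)⁻¹ * (1 - Matrix.of fun _ j' => vlin a av bv d j'))) :=
  vlin_fderiv_formulas_general a av bv d hinv hden
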